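/- Let K ≥ 1, α > 0, η_K = √2(K−1)/K², f(x) = ((K−1)η_K/α)‖x‖, g*(y) = η_K‖y‖, h(x) = ‖x‖²/(2α), e a unit vector, x^0 = e/√2, u^0 = x^0/α. The DYS-gf iterates satisfy x^1 = −(√2 − K η_K) e, x^k = 0 for k = 2,...,K, u^1 = (1/α)(√2 − η_K) e, and u^k = (1/α)(K−k) η_K e for k = 2,...,K. -/

import Mathlib

/-!
Both proximal maps are soft-thresholdings, so starting on the line `ℝ e` every iterate stays on
it. Since `∇h = id / α`, the forward step cancels `p^{k+1}` and the `x`-update is the prox of `f`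
at `-α u^{k+1}`. The first step gives `u¹ + x¹/α = (K - 1) η_K e / α`; from then on each `u`-step
lowers the coefficient by `η_K / α`, while `-α u^{k+1} = -(K - k - 1) η_K e` lies within the
threshold `(K - 1) η_K` of the `x`-step, so `x^{k+1} = 0`.
-/

noncomputable section

/-- `p` is the proximal point of `f` at `x` (minimizer over `ℝⁿ`). -/
def IsProxPt {n : ℕ} (f : EuclideanSpace ℝ (Fin n) → ℝ)
    (x p : EuclideanSpace ℝ (Fin n)) : Prop :=
  ∀ y, f p + (1 / 2) * ‖p - x‖ ^ 2 ≤ f y + (1 / 2) * ‖y - x‖ ^ 2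

/-- The prox of `c |·|` on `ℝ`: by Moreau's decomposition, `t` minus its projection onto
`[-c, c]`. -/
def softThreshold (c t : ℝ) : ℝ := t - max (-c) (min c t)

section SoftThreshold

variable {c t : ℝ}

lemma softThreshold_of_le (hc : 0 ≤ c) (h : c ≤ t) : softThreshold c t = t - c := by
  rw [softThreshold, min_eq_left h, max_eq_right (by linarith)]

lemma softThreshold_of_abs_le (h : |t| ≤ c) : softThreshold c t = 0 := by
  obtain ⟨h₁, h₂⟩ := abs_le.mp h
  rw [softThreshold, min_eq_right h₂, max_eq_right h₁, sub_self]

lemma softThreshold_of_le_neg (hc : 0 ≤ c) (h : t ≤ -c) : softThreshold c t = t + c := by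
  rw [softThreshold, min_eq_right (by linarith), max_eq_left h, sub_neg_eq_add]

lemma abs_sub_softThreshold_le (hc : 0 ≤ c) : |t - softThreshold c t| ≤ c := by
  rw [softThreshold, sub_sub_cancel, abs_le]
  exact ⟨le_max_left _ _, max_le (by linarith) (min_le_left _ _)⟩

/-- The optimality condition `t - s ∈ c ∂|·|(s)` of the one-dimensional prox `s`. -/
lemma sub_softThreshold_mul_self (hc : 0 ≤ c) :
    (t - softThreshold c t) * softThreshold c t = c * |softThreshold c t| := by
  rcases le_or_gt c t with h | h
  · rw [softThreshold_of_le hc h, abs_of_nonneg (by linarith)]; ring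
  rcases le_or_gt t (-c) with h' | h'
  · rw [softThreshold_of_le_neg hc h', abs_of_nonpos (by linarith)]; ring
  · rw [softThreshold_of_abs_le (abs_le.mpr ⟨h'.le, h.le⟩)]; simp

end SoftThreshold

variable {n : ℕ}

lemma IsProxPt.unique_of_convexOn {f : EuclideanSpace ℝ (Fin n) → ℝ}
    (hf : ConvexOn ℝ Set.univ f) {x p q : EuclideanSpace ℝ (Fin n)}
    (hp : IsProxPt f x p) (hq : IsProxPt f x q) : p = q := by
  set m : EuclideanSpace ℝ (Fin n) := (1 / 2 : ℝ) • p + (1 / 2 : ℝ) • q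
  have hfm : f m ≤ (1 / 2) * f p + (1 / 2) * f q :=
    hf.2 (Set.mem_univ p) (Set.mem_univ q) (by norm_num) (by norm_num) (by norm_num)
  have hmid : ‖m - x‖ ^ 2 = (‖p - x‖ ^ 2 + ‖q - x‖ ^ 2) / 2 - ‖p - q‖ ^ 2 / 4 := by
    have hpar := parallelogram_law_with_norm ℝ (p - x) (q - x)
    have hsum : (p - x) + (q - x) = (2 : ℝ) • (m - x) := by module
    rw [hsum, sub_sub_sub_cancel_right, norm_smul, Real.norm_two] at hpar
    linarith
  have hpq : ‖p - q‖ ^ 2 ≤ 0 := by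
    have := hp m
    have := hq m
    nlinarith
  exact sub_eq_zero.mp (norm_eq_zero.mp (pow_eq_zero_iff two_ne_zero |>.mp
    (le_antisymm hpq (sq_nonneg _))))

lemma isProxPt_norm_softThreshold_smul {c : ℝ} (hc : 0 ≤ c) {e : EuclideanSpace ℝ (Fin n)}
    (he : ‖e‖ = 1) (t : ℝ) :
    IsProxPt (fun v => c * ‖v‖) (t • e) (softThreshold c t • e) := by
  intro y
  set s := softThreshold c t
  have hye : |inner ℝ y e| ≤ ‖y‖ := by
    simpa [he] using abs_real_inner_le_norm y e
  have hexpand :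
      ‖y - t • e‖ ^ 2 = ‖y - s • e‖ ^ 2 + 2 * (s - t) * (inner ℝ y e - s) + (s - t) ^ 2 := by
    rw [show y - t • e = (y - s • e) + (s - t) • e by module, norm_add_sq_real,
      real_inner_smul_right, inner_sub_left, real_inner_smul_left, real_inner_self_eq_norm_sq,
      norm_smul, he, Real.norm_eq_abs]
    ring_nf
    rw [sq_abs]
    ring
  have hse : ‖s • e - t • e‖ ^ 2 = (s - t) ^ 2 := by
    rw [← sub_smul, norm_smul, he, mul_one, Real.norm_eq_abs, sq_abs]
  have hcs : ‖s • e‖ = |s| := by rw [norm_smul, he, mul_one, Real.norm_eq_abs]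
  have hinner : |(s - t) * inner ℝ y e| ≤ c * ‖y‖ := by
    rw [abs_mul, abs_sub_comm]
    exact mul_le_mul (abs_sub_softThreshold_le hc) hye (abs_nonneg _) hc
  have hopt := sub_softThreshold_mul_self (t := t) hc
  beta_reduce
  rw [hcs, hse, hexpand]
  nlinarith [neg_abs_le ((s - t) * inner ℝ y e), sq_nonneg ‖y - s • e‖]

lemma IsProxPt.eq_softThreshold_smul {c : ℝ} (hc : 0 ≤ c) {e p : EuclideanSpace ℝ (Fin n)}
    (he : ‖e‖ = 1) {t : ℝ} (hp : IsProxPt (fun v => c * ‖v‖) (t • e) p) :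
    p = softThreshold c t • e :=
  hp.unique_of_convexOn ((convexOn_norm convex_univ).smul hc)
    (isProxPt_norm_softThreshold_smul hc he t)

lemma mul_sqrt_two_mul_sub_one_div_sq_le {K : ℝ} (hK : 0 < K) :
    K * (Real.sqrt 2 * (K - 1) / K ^ 2) ≤ Real.sqrt 2 := by
  rw [mul_div_assoc', div_le_iff₀ (by positivity)]
  nlinarith [Real.sqrt_nonneg 2]

section DysGf

variable {e : EuclideanSpace ℝ (Fin n)} {x u : ℕ → EuclideanSpace ℝ (Fin n)}
  {α η : ℝ} {K : ℕ}

lemma dysGf_first_step (hα : 0 < α) (hη : 0 ≤ η) (hKη : K * η ≤ Real.sqrt 2) (hK : 1 ≤ K)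
    (he : ‖e‖ = 1) (hx0 : x 0 = (Real.sqrt 2)⁻¹ • e) (hu0 : u 0 = α⁻¹ • ((Real.sqrt 2)⁻¹ • e))
    (hu : IsProxPt (fun v => α⁻¹ * η * ‖v‖) (u 0 + α⁻¹ • x 0) (u 1))
    (hx : IsProxPt (fun v => ((K : ℝ) - 1) * η * ‖v‖) ((-α) • u 1) (x 1)) :
    u 1 = (α⁻¹ * (Real.sqrt 2 - η)) • e ∧ x 1 = -((Real.sqrt 2 - K * η) • e) := by
  have hK1 : (1 : ℝ) ≤ K := by exact_mod_cast hK
  have hαη : 0 ≤ α⁻¹ * η := mul_nonneg (inv_nonneg.mpr hα.le) hη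
  have hin : u 0 + α⁻¹ • x 0 = (α⁻¹ * Real.sqrt 2) • e := by
    rw [hu0, hx0, ← two_smul ℝ, smul_smul, smul_smul]
    congr 1
    field_simp
    norm_num
  have hu₁ : u 1 = (α⁻¹ * (Real.sqrt 2 - η)) • e := by
    rw [hin] at hu
    rw [hu.eq_softThreshold_smul hαη he, softThreshold_of_le hαη, mul_sub]
    exact mul_le_mul_of_nonneg_left (by nlinarith) (inv_nonneg.mpr hα.le)
  refine ⟨hu₁, ?_⟩
  rw [hu₁, smul_smul, ← mul_assoc, neg_mul, mul_inv_cancel₀ hα.ne', neg_one_mul] at hx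
  rw [hx.eq_softThreshold_smul (mul_nonneg (by linarith) hη) he,
    softThreshold_of_le_neg (mul_nonneg (by linarith) hη) (by linarith), ← neg_smul]
  congr 1
  ring

lemma dysGf_step (hα : 0 < α) (hη : 0 ≤ η) (he : ‖e‖ = 1) {k : ℕ}
    (hu : IsProxPt (fun v => α⁻¹ * η * ‖v‖) (u k + α⁻¹ • x k) (u (k + 1)))
    (hx : IsProxPt (fun v => ((K : ℝ) - 1) * η * ‖v‖) ((-α) • u (k + 1)) (x (k + 1)))
    (hk : k + 1 ≤ K) (h : u k + α⁻¹ • x k = (α⁻¹ * ((K - k) * η)) • e) :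
    u (k + 1) = (α⁻¹ * ((K - (k + 1 : ℕ)) * η)) • e ∧ x (k + 1) = 0 := by
  have hkK : (k : ℝ) + 1 ≤ K := by exact_mod_cast hk
  have hαη : 0 ≤ α⁻¹ * η := mul_nonneg (inv_nonneg.mpr hα.le) hη
  have hu' : u (k + 1) = (α⁻¹ * ((K - (k + 1 : ℕ)) * η)) • e := by
    rw [h] at hu
    rw [hu.eq_softThreshold_smul hαη he, softThreshold_of_le hαη]
    · push_cast
      congr 1
      ring
    · exact mul_le_mul_of_nonneg_left (le_mul_of_one_le_left hη (by linarith))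
        (inv_nonneg.mpr hα.le)
  refine ⟨hu', ?_⟩
  rw [hu', smul_smul] at hx
  rw [hx.eq_softThreshold_smul (mul_nonneg (by linarith) hη) he, softThreshold_of_abs_le,
    zero_smul]
  rw [← mul_assoc, neg_mul, mul_inv_cancel₀ hα.ne', neg_one_mul, abs_neg, abs_of_nonneg
    (mul_nonneg (by push_cast; linarith) hη)]
  push_cast
  exact mul_le_mul_of_nonneg_right (by linarith [(Nat.cast_nonneg k : (0 : ℝ) ≤ k)]) hη

lemma dysGf_invariant (hα : 0 < α) (hη : 0 ≤ η) (he : ‖e‖ = 1)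
    (hu : ∀ k, IsProxPt (fun v => α⁻¹ * η * ‖v‖) (u k + α⁻¹ • x k) (u (k + 1)))
    (hx : ∀ k, IsProxPt (fun v => ((K : ℝ) - 1) * η * ‖v‖) ((-α) • u (k + 1)) (x (k + 1)))
    (h₁ : u 1 + α⁻¹ • x 1 = (α⁻¹ * ((K - 1) * η)) • e) :
    ∀ k, 1 ≤ k → k ≤ K → u k + α⁻¹ • x k = (α⁻¹ * ((K - k) * η)) • e := by
  intro k hk
  induction k, hk using Nat.le_induction with
  | base => exact fun _ => by simpa using h₁
  | succ k _ ih =>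
    intro hk
    obtain ⟨hu', hx'⟩ := dysGf_step hα hη he (hu k) (hx k) hk (ih (by omega))
    rw [hu', hx', smul_zero, add_zero]

lemma dysGf_eq_of_two_le (hα : 0 < α) (hη : 0 ≤ η) (he : ‖e‖ = 1)
    (hu : ∀ k, IsProxPt (fun v => α⁻¹ * η * ‖v‖) (u k + α⁻¹ • x k) (u (k + 1)))
    (hx : ∀ k, IsProxPt (fun v => ((K : ℝ) - 1) * η * ‖v‖) ((-α) • u (k + 1)) (x (k + 1)))
    (h₁ : u 1 + α⁻¹ • x 1 = (α⁻¹ * ((K - 1) * η)) • e) {k : ℕ} (hk₂ : 2 ≤ k) (hkK : k ≤ K) :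
    u k = (α⁻¹ * ((K - k) * η)) • e ∧ x k = 0 := by
  obtain ⟨j, rfl⟩ : ∃ j, k = j + 1 := ⟨k - 1, by omega⟩
  exact dysGf_step hα hη he (hu j) (hx j) hkK
    (dysGf_invariant hα hη he hu hx h₁ j (by omega) (by omega))

end DysGf

/-- Explicit DYS-gf iterates for `f = ((K−1)η_K/α)‖·‖`, `g* = η_K‖·‖`,
`h = ‖·‖²/(2α)` (so `∇h(z) = z/α`), `η_K = √2(K−1)/K²`, `x⁰ = e/√2`, `u⁰ = x⁰/α`:
`x¹ = −(√2 − Kη_K)e`, `x^k = 0` for `k = 2,…,K`, `u¹ = (√2 − η_K)e/α`, and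
`u^k = (K−k)η_K e/α` for `k = 2,…,K`. -/
theorem dys_gf_example_iterates (n K : ℕ) (hK : 1 ≤ K) (α : ℝ) (hα : 0 < α)
    (e : EuclideanSpace ℝ (Fin n)) (he : ‖e‖ = 1)
    (x u : ℕ → EuclideanSpace ℝ (Fin n))
    (hx0 : x 0 = (Real.sqrt 2)⁻¹ • e) (hu0 : u 0 = α⁻¹ • ((Real.sqrt 2)⁻¹ • e))
    (hu : ∀ k, IsProxPt
      (fun v => α⁻¹ * ((Real.sqrt 2 * ((K : ℝ) - 1) / (K : ℝ) ^ 2) * ‖v‖))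
      (u k + α⁻¹ • x k) (u (k + 1)))
    (hx : ∀ k, IsProxPt
      (fun v => α * ((((K : ℝ) - 1) * (Real.sqrt 2 * ((K : ℝ) - 1) / (K : ℝ) ^ 2) / α) * ‖v‖))
      ((α • u k + x k - α • u (k + 1)) -
        α • (α⁻¹ • (α • u k + x k - α • u (k + 1))) - α • u (k + 1))
      (x (k + 1))) :
    x 1 = -((Real.sqrt 2 - (K : ℝ) * (Real.sqrt 2 * ((K : ℝ) - 1) / (K : ℝ) ^ 2)) • e) ∧
    (∀ k, 2 ≤ k → k ≤ K → x k = 0) ∧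
    u 1 = (α⁻¹ * (Real.sqrt 2 - Real.sqrt 2 * ((K : ℝ) - 1) / (K : ℝ) ^ 2)) • e ∧
    (∀ k, 2 ≤ k → k ≤ K →
      u k = (α⁻¹ * (((K : ℝ) - (k : ℝ)) * (Real.sqrt 2 * ((K : ℝ) - 1) / (K : ℝ) ^ 2))) • e) := by
  have hK₁ : (1 : ℝ) ≤ K := by exact_mod_cast hK
  set η := Real.sqrt 2 * ((K : ℝ) - 1) / (K : ℝ) ^ 2
  have hη : 0 ≤ η := div_nonneg (mul_nonneg (Real.sqrt_nonneg 2) (by linarith)) (sq_nonneg _)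
  have hKη : (K : ℝ) * η ≤ Real.sqrt 2 := mul_sqrt_two_mul_sub_one_div_sq_le (by linarith)
  have hu' : ∀ k, IsProxPt (fun v => α⁻¹ * η * ‖v‖) (u k + α⁻¹ • x k) (u (k + 1)) := by
    simpa only [mul_assoc] using hu
  have hx' : ∀ k, IsProxPt (fun v => ((K : ℝ) - 1) * η * ‖v‖) ((-α) • u (k + 1)) (x (k + 1)) := by
    have hf : (fun v : EuclideanSpace ℝ (Fin n) => α * (((K : ℝ) - 1) * η / α * ‖v‖)) =
        fun v => ((K : ℝ) - 1) * η * ‖v‖ := by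
      funext v
      field_simp
    intro k
    simpa only [hf, smul_inv_smul₀ hα.ne', sub_self, zero_sub, neg_smul] using hx k
  obtain ⟨hu₁, hx₁⟩ := dysGf_first_step hα hη hKη hK he hx0 hu0 (hu' 0) (hx' 0)
  have h₁ : u 1 + α⁻¹ • x 1 = (α⁻¹ * ((K - 1) * η)) • e := by
    rw [hu₁, hx₁, smul_neg, smul_smul, ← sub_eq_add_neg, ← sub_smul]
    congr 1
    ring
  exact ⟨hx₁, fun k hk₂ hkK => (dysGf_eq_of_two_le hα hη he hu' hx' h₁ hk₂ hkK).2, hu₁,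
    fun k hk₂ hkK => (dysGf_eq_of_two_le hα hη he hu' hx' h₁ hk₂ hkK).1⟩
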